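/- Let (A_j)_{j≥1} be matrices in GL₂(ℝ) with det A_j > 0 and A_{j+1}ℤ² ⊆ A_jℤ² for all j, and let (ζ_j)_{j≥1} be positive reals with ζ_{j+1} ∈ ζ_jℤ (so ζ_{j+1}ℤ ⊆ ζ_jℤ) and det A_j/ζ_j ∈ ℤ for every j. Then there exists a nested sequence Γ₁ ⊇ Γ₂ ⊇ ⋯ of lattices in H₃(ℝ) with p(Γ_j) = A_jℤ² and ξ_{Γ_j} = ζ_j for all j. Moreover, if ⋃_j {v ∈ ℝ² : ⟨v,w⟩ ∈ ℤ for all w ∈ A_jℤ²} is dense in ℝ², then ⋂_j p(Γ_j) = {0}; and if in addition ⋃_j ζ_j⁻¹ℤ is dense in ℝ, then ⋂_j Γ_j = {1}. -/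

import Mathlib

open MeasureTheory

/-- The real Heisenberg group `H₃(ℝ)`: `ℝ³` with
`(a,b,c)·(a′,b′,c′) = (a+a′, b+b′, c+c′+a·b′)`. -/
@[ext] structure H3 : Type where
  x : ℝ
  y : ℝ
  z : ℝ

namespace H3

instance : Mul H3 := ⟨fun g h => ⟨g.x + h.x, g.y + h.y, g.z + h.z + g.x * h.y⟩⟩
instance : One H3 := ⟨⟨0, 0, 0⟩⟩
instance : Inv H3 := ⟨fun g => ⟨-g.x, -g.y, -g.z + g.x * g.y⟩⟩

@[simp] lemma mul_x (g h : H3) : (g * h).x = g.x + h.x := rfl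
@[simp] lemma mul_y (g h : H3) : (g * h).y = g.y + h.y := rfl
@[simp] lemma mul_z (g h : H3) : (g * h).z = g.z + h.z + g.x * h.y := rfl
@[simp] lemma one_x : (1 : H3).x = 0 := rfl
@[simp] lemma one_y : (1 : H3).y = 0 := rfl
@[simp] lemma one_z : (1 : H3).z = 0 := rfl
@[simp] lemma inv_x (g : H3) : g⁻¹.x = -g.x := rfl
@[simp] lemma inv_y (g : H3) : g⁻¹.y = -g.y := rfl
@[simp] lemma inv_z (g : H3) : g⁻¹.z = -g.z + g.x * g.y := rfl

instance : Group H3 where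
  mul_assoc a b c := by ext <;> simp <;> ring
  one_mul a := by ext <;> simp
  mul_one a := by ext <;> simp
  inv_mul_cancel a := by ext <;> simp

/-- The Euclidean topology on `H₃(ℝ)`. -/
instance : TopologicalSpace H3 :=
  TopologicalSpace.induced (fun g => (g.x, g.y, g.z)) inferInstance

instance : MeasurableSpace H3 := borel H3

/-- `a(t)`. -/
def Ha (t : ℝ) : H3 := ⟨t, 0, 0⟩
/-- `b(t)`. -/
def Hb (t : ℝ) : H3 := ⟨0, t, 0⟩
/-- `c(t)`, the center. -/
def Hc (t : ℝ) : H3 := ⟨0, 0, t⟩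

/-- The projection `p : H₃(ℝ) → ℝ²`. -/
def pmap (g : H3) : ℝ × ℝ := (g.x, g.y)

/-- The kernel of `p`, i.e. the center of `H₃(ℝ)`, as a subgroup. -/
def pKer : Subgroup H3 where
  carrier := {g | g.x = 0 ∧ g.y = 0}
  one_mem' := ⟨rfl, rfl⟩
  mul_mem' := by
    rintro a b ⟨ha1, ha2⟩ ⟨hb1, hb2⟩
    exact ⟨by simp [ha1, hb1], by simp [ha2, hb2]⟩
  inv_mem' := by
    rintro a ⟨ha1, ha2⟩
    exact ⟨by simp [ha1], by simp [ha2]⟩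

/-- A lattice in `H₃(ℝ)`: a discrete subgroup with compact quotient. -/
def IsLattice (Γ : Subgroup H3) : Prop :=
  DiscreteTopology Γ ∧ CompactSpace (H3 ⧸ Γ)

/-- `k_Γ`: the index of the commutator subgroup `[Γ,Γ]` in `Γ ∩ ker p`. -/
noncomputable def kIdx (Γ : Subgroup H3) : ℕ :=
  Subgroup.relIndex ⁅Γ, Γ⁆ (Γ ⊓ pKer)

/-- The integer lattice `ℤ² ⊆ ℝ²`. -/
def intLattice : Set (ℝ × ℝ) := {v | ∃ m n : ℤ, v = ((m : ℝ), (n : ℝ))}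

/-- The action of a `2×2` matrix on `ℝ²`. -/
def matVec (A : Matrix (Fin 2) (Fin 2) ℝ) (v : ℝ × ℝ) : ℝ × ℝ :=
  (A 0 0 * v.1 + A 0 1 * v.2, A 1 0 * v.1 + A 1 1 * v.2)

/-- The dual of a subset of `ℝ²`:
all vectors pairing integrally with every element of `S`. -/
def dualSet (S : Set (ℝ × ℝ)) : Set (ℝ × ℝ) :=
  {v | ∀ w ∈ S, ∃ n : ℤ, v.1 * w.1 + v.2 * w.2 = (n : ℝ)}

end H3

open H3

namespace H3

open Topology

/-- Coordinates as an equivalence with `ℝ × ℝ × ℝ`. -/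
def coordEquiv : H3 ≃ ℝ × ℝ × ℝ where
  toFun g := (g.x, g.y, g.z)
  invFun p := ⟨p.1, p.2.1, p.2.2⟩
  left_inv _ := rfl
  right_inv _ := rfl

lemma isInducing_coord : IsInducing (fun g : H3 => (g.x, g.y, g.z)) := ⟨rfl⟩

/-- `H3` is homeomorphic to `ℝ³`. -/
def coordHomeo : H3 ≃ₜ ℝ × ℝ × ℝ :=
  coordEquiv.toHomeomorphOfIsInducing isInducing_coord

lemma continuous_x : Continuous (H3.x) := (continuous_fst).comp coordHomeo.continuous
lemma continuous_y : Continuous (H3.y) :=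
  (continuous_fst.comp continuous_snd).comp coordHomeo.continuous
lemma continuous_z : Continuous (H3.z) :=
  (continuous_snd.comp continuous_snd).comp coordHomeo.continuous

lemma continuous_mk3 {α : Type*} [TopologicalSpace α] {f g h : α → ℝ}
    (hf : Continuous f) (hg : Continuous g) (hh : Continuous h) :
    Continuous (fun a => (⟨f a, g a, h a⟩ : H3)) := by
  rw [isInducing_coord.continuous_iff]
  exact hf.prodMk (hg.prodMk hh)

instance : IsTopologicalGroup H3 where
  continuous_mul := by
    have : Continuous (fun p : H3 × H3 => (⟨p.1.x + p.2.x, p.1.y + p.2.y,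
        p.1.z + p.2.z + p.1.x * p.2.y⟩ : H3)) := by
      apply continuous_mk3
      · exact (continuous_x.comp continuous_fst).add (continuous_x.comp continuous_snd)
      · exact (continuous_y.comp continuous_fst).add (continuous_y.comp continuous_snd)
      · exact ((continuous_z.comp continuous_fst).add (continuous_z.comp continuous_snd)).add
          ((continuous_x.comp continuous_fst).mul (continuous_y.comp continuous_snd))
    exact this
  continuous_inv := by
    have : Continuous (fun g : H3 => (⟨-g.x, -g.y, -g.z + g.x * g.y⟩ : H3)) := by
      apply continuous_mk3
      · exact continuous_x.neg
      · exact continuous_y.neg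
      · exact (continuous_z.neg).add (continuous_x.mul continuous_y)
    exact this

end H3
namespace H3

/-- Quadratic section used to define lattice subgroups of `H3`. -/
noncomputable def Fq (a b c d α β : ℝ) (m n : ℤ) : ℝ :=
  (m : ℝ) * ((m : ℝ) - 1) / 2 * (a * c) + (n : ℝ) * ((n : ℝ) - 1) / 2 * (b * d)
    + (m : ℝ) * (n : ℝ) * (a * d) + (m : ℝ) * α + (n : ℝ) * β

lemma Fq_zero (a b c d α β : ℝ) : Fq a b c d α β 0 0 = 0 := by simp [Fq]

lemma Fq_add (a b c d α β : ℝ) (m n M N : ℤ) :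
    Fq a b c d α β (m + M) (n + N)
      = Fq a b c d α β m n + Fq a b c d α β M N
        + ((a * m + b * n) * (c * M + d * N)) + ((M : ℝ) * (n : ℝ)) * (a * d - b * c) := by
  simp only [Fq]; push_cast; ring

/-- The subgroup of `H3` determined by a basis `(a,c), (b,d)` of a planar lattice,
a section shift `(α, β)`, and a central period `ζ` dividing the determinant. -/
noncomputable def latticeSub (a b c d α β ζ : ℝ) (dj : ℤ) (hd : a * d - b * c = (dj : ℝ) * ζ) :
    Subgroup H3 where
  carrier := {g | ∃ m n k : ℤ, g.x = a * m + b * n ∧ g.y = c * m + d * n ∧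
    g.z = Fq a b c d α β m n + k * ζ}
  one_mem' := ⟨0, 0, 0, by simp [Fq]⟩
  mul_mem' := by
    rintro g h ⟨m, n, k, h1, h2, h3⟩ ⟨M, N, K, g1, g2, g3⟩
    refine ⟨m + M, n + N, k + K - M * n * dj, ?_, ?_, ?_⟩
    · simp only [mul_x, h1, g1]; push_cast; ring
    · simp only [mul_y, h2, g2]; push_cast; ring
    · simp only [mul_z, h3, g3, h1, g2, Fq_add]
      push_cast
      linear_combination (-(M : ℝ) * (n : ℝ)) * hd
  inv_mem' := by
    rintro g ⟨m, n, k, h1, h2, h3⟩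
    refine ⟨-m, -n, -(m * n * dj) - k, ?_, ?_, ?_⟩
    · simp only [inv_x, h1]; push_cast; ring
    · simp only [inv_y, h2]; push_cast; ring
    · simp only [inv_z, h1, h2, h3, Fq]
      push_cast
      linear_combination (-(m : ℝ) * (n : ℝ)) * hd

lemma mem_latticeSub {a b c d α β ζ : ℝ} {dj : ℤ} {hd : a * d - b * c = (dj : ℝ) * ζ}
    {g : H3} : g ∈ latticeSub a b c d α β ζ dj hd ↔
      ∃ m n k : ℤ, g.x = a * m + b * n ∧ g.y = c * m + d * n ∧
        g.z = Fq a b c d α β m n + k * ζ := Iff.rfl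

/-- Injectivity of an invertible integer combination. -/
lemma int_pair_eq_zero {a b c d : ℝ} (hD : a * d - b * c ≠ 0) {m n : ℤ}
    (h1 : a * m + b * n = 0) (h2 : c * m + d * n = 0) : m = 0 ∧ n = 0 := by
  have hm : (m : ℝ) * (a * d - b * c) = 0 := by linear_combination d * h1 - b * h2
  have hn : (n : ℝ) * (a * d - b * c) = 0 := by linear_combination a * h2 - c * h1
  constructor
  · exact_mod_cast (mul_eq_zero.1 hm).resolve_right hD
  · exact_mod_cast (mul_eq_zero.1 hn).resolve_right hD

end H3
namespace H3

lemma latticeSub_discrete {a b c d α β ζ : ℝ} {dj : ℤ} {hd : a * d - b * c = (dj : ℝ) * ζ}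
    (hD : a * d - b * c ≠ 0) (hζ : 0 < ζ) :
    DiscreteTopology (latticeSub a b c d α β ζ dj hd) := by
  set D := a * d - b * c with hDdef
  have hDpos : 0 < |D| := abs_pos.mpr hD
  set ε : ℝ := |D| / (|a| + |b| + |c| + |d| + 1) with hεdef
  have hden : (0:ℝ) < |a| + |b| + |c| + |d| + 1 := by positivity
  have hε : 0 < ε := div_pos hDpos hden
  apply discreteTopology_of_isOpen_singleton_one
  have hU : IsOpen {g : H3 | |g.x| < ε ∧ |g.y| < ε ∧ |g.z| < ζ} := by
    refine IsOpen.inter (isOpen_Iio.preimage (continuous_x.abs)) ?_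
    exact IsOpen.inter (isOpen_Iio.preimage (continuous_y.abs))
      (isOpen_Iio.preimage (continuous_z.abs))
  have key : (Subtype.val ⁻¹' {g : H3 | |g.x| < ε ∧ |g.y| < ε ∧ |g.z| < ζ} :
      Set (latticeSub a b c d α β ζ dj hd)) = {1} := by
    ext ⟨g, hg⟩
    simp only [Set.mem_preimage, Set.mem_setOf_eq, Set.mem_singleton_iff]
    constructor
    · rintro ⟨hx, hy, hz⟩
      obtain ⟨m, n, k, h1, h2, h3⟩ := hg
      -- show m = 0 and n = 0
      have hmr : (m : ℝ) * D = d * g.x - b * g.y := by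
        rw [h1, h2, hDdef]; ring
      have hnr : (n : ℝ) * D = a * g.y - c * g.x := by
        rw [h1, h2, hDdef]; ring
      have hm0 : m = 0 := by
        by_contra hm
        have h1m : (1:ℝ) ≤ |(m:ℝ)| := by
          have : (1:ℤ) ≤ |m| := Int.one_le_abs hm
          exact_mod_cast this
        have : |D| ≤ |(m:ℝ)| * |D| := le_mul_of_one_le_left (abs_nonneg D) h1m
        have hb : |(m:ℝ)| * |D| = |d * g.x - b * g.y| := by
          rw [← abs_mul, hmr]
        have hlt : |d * g.x - b * g.y| < (|a| + |b| + |c| + |d| + 1) * ε := by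
          calc |d * g.x - b * g.y| ≤ |d| * |g.x| + |b| * |g.y| := by
                calc |d * g.x - b * g.y| ≤ |d * g.x| + |b * g.y| := abs_sub _ _
                _ = |d| * |g.x| + |b| * |g.y| := by rw [abs_mul, abs_mul]
          _ < (|a| + |b| + |c| + |d| + 1) * ε := by
                nlinarith [abs_nonneg (g.x), abs_nonneg (g.y), abs_nonneg a, abs_nonneg b,
                  abs_nonneg c, abs_nonneg d]
        rw [hεdef] at hlt
        rw [mul_div_cancel₀ _ (ne_of_gt hden)] at hlt
        linarith
      have hn0 : n = 0 := by
        by_contra hn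
        have h1n : (1:ℝ) ≤ |(n:ℝ)| := by
          have : (1:ℤ) ≤ |n| := Int.one_le_abs hn
          exact_mod_cast this
        have : |D| ≤ |(n:ℝ)| * |D| := le_mul_of_one_le_left (abs_nonneg D) h1n
        have hb : |(n:ℝ)| * |D| = |a * g.y - c * g.x| := by
          rw [← abs_mul, hnr]
        have hlt : |a * g.y - c * g.x| < (|a| + |b| + |c| + |d| + 1) * ε := by
          calc |a * g.y - c * g.x| ≤ |a| * |g.y| + |c| * |g.x| := by
                calc |a * g.y - c * g.x| ≤ |a * g.y| + |c * g.x| := abs_sub _ _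
                _ = |a| * |g.y| + |c| * |g.x| := by rw [abs_mul, abs_mul]
          _ < (|a| + |b| + |c| + |d| + 1) * ε := by
                nlinarith [abs_nonneg (g.x), abs_nonneg (g.y), abs_nonneg a, abs_nonneg b,
                  abs_nonneg c, abs_nonneg d]
        rw [hεdef] at hlt
        rw [mul_div_cancel₀ _ (ne_of_gt hden)] at hlt
        linarith
      subst hm0; subst hn0
      have hzk : g.z = (k : ℝ) * ζ := by rw [h3, Fq_zero]; ring
      have hk0 : k = 0 := by
        by_contra hk
        have h1k : (1:ℝ) ≤ |(k:ℝ)| := by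
          have : (1:ℤ) ≤ |k| := Int.one_le_abs hk
          exact_mod_cast this
        have : ζ ≤ |(k:ℝ)| * ζ := le_mul_of_one_le_left (le_of_lt hζ) h1k
        have : ζ ≤ |g.z| := by
          rw [hzk, abs_mul, abs_of_pos hζ]; exact this
        linarith
      subst hk0
      have : g = 1 := by
        ext
        · simpa using h1
        · simpa using h2
        · simpa using hzk
      exact Subtype.ext this
    · intro h
      have hg1 : g = 1 := congrArg Subtype.val h
      subst hg1
      simp only [one_x, one_y, one_z, abs_zero]
      exact ⟨hε, hε, hζ⟩
  rw [← key]
  exact hU.preimage continuous_subtype_val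

end H3
namespace H3

lemma latticeSub_cocompact {a b c d α β ζ : ℝ} {dj : ℤ} {hd : a * d - b * c = (dj : ℝ) * ζ}
    (hD : a * d - b * c ≠ 0) (hζ : 0 < ζ) :
    CompactSpace (H3 ⧸ latticeSub a b c d α β ζ dj hd) := by
  set Γ := latticeSub a b c d α β ζ dj hd with hΓ
  set R : ℝ := |a| + |b| + |c| + |d|
  set K : Set H3 :=
    coordHomeo.symm '' (Set.Icc (-R) R ×ˢ Set.Icc (-R) R ×ˢ Set.Icc 0 ζ) with hK
  have hKc : IsCompact K :=
    ((isCompact_Icc.prod (isCompact_Icc.prod isCompact_Icc)).image coordHomeo.symm.continuous)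
  have hmemK : ∀ g : H3, |g.x| ≤ R → |g.y| ≤ R → g.z ∈ Set.Icc (0:ℝ) ζ → g ∈ K := by
    intro g hx hy hz
    refine ⟨(g.x, g.y, g.z), ?_, rfl⟩
    exact ⟨abs_le.1 hx, abs_le.1 hy, hz⟩
  have hsurj : ∀ g : H3, ∃ γ ∈ Γ, g * γ ∈ K := by
    intro g
    set D := a * d - b * c with hDdef
    set r : ℝ := (d * g.x - b * g.y) / D with hrdef
    set s : ℝ := (a * g.y - c * g.x) / D with hsdef
    have hxg : g.x = a * r + b * s := by
      rw [hrdef, hsdef]; field_simp; ring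
    have hyg : g.y = c * r + d * s := by
      rw [hrdef, hsdef]; field_simp; ring
    set m : ℤ := ⌊r⌋ with hm
    set n : ℤ := ⌊s⌋ with hn
    set γ₁ : H3 := ⟨a * (-m : ℤ) + b * (-n : ℤ), c * (-m : ℤ) + d * (-n : ℤ),
      Fq a b c d α β (-m) (-n) + (0:ℤ) * ζ⟩ with hγ₁
    have hγ₁mem : γ₁ ∈ Γ := ⟨-m, -n, 0, rfl, rfl, rfl⟩
    set h := g * γ₁ with hh
    have hhx : h.x = a * (r - m) + b * (s - n) := by
      show g.x + _ = _
      rw [hxg, hγ₁]; push_cast; ring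
    have hhy : h.y = c * (r - m) + d * (s - n) := by
      show g.y + _ = _
      rw [hyg, hγ₁]; push_cast; ring
    have hrm : 0 ≤ r - (m:ℝ) ∧ r - (m:ℝ) < 1 :=
      ⟨by simp only [hm]; linarith [Int.floor_le r],
       by simp only [hm]; linarith [Int.lt_floor_add_one r]⟩
    have hsn : 0 ≤ s - (n:ℝ) ∧ s - (n:ℝ) < 1 :=
      ⟨by simp only [hn]; linarith [Int.floor_le s],
       by simp only [hn]; linarith [Int.lt_floor_add_one s]⟩
    have hxb : |h.x| ≤ R := by
      rw [hhx]
      calc |a * (r - m) + b * (s - n)| ≤ |a * (r - m)| + |b * (s - n)| := abs_add_le _ _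
        _ ≤ |a| + |b| := by
            rw [abs_mul, abs_mul]
            have h1 : |r - (m:ℝ)| ≤ 1 := by rw [abs_le]; constructor <;> linarith [hrm.1, hrm.2]
            have h2 : |s - (n:ℝ)| ≤ 1 := by rw [abs_le]; constructor <;> linarith [hsn.1, hsn.2]
            nlinarith [abs_nonneg a, abs_nonneg b, abs_nonneg (r - (m:ℝ)), abs_nonneg (s - (n:ℝ))]
        _ ≤ R := by
            show |a| + |b| ≤ |a| + |b| + |c| + |d|
            have := abs_nonneg c; have := abs_nonneg d; linarith
    have hyb : |h.y| ≤ R := by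
      rw [hhy]
      calc |c * (r - m) + d * (s - n)| ≤ |c * (r - m)| + |d * (s - n)| := abs_add_le _ _
        _ ≤ |c| + |d| := by
            rw [abs_mul, abs_mul]
            have h1 : |r - (m:ℝ)| ≤ 1 := by rw [abs_le]; constructor <;> linarith [hrm.1, hrm.2]
            have h2 : |s - (n:ℝ)| ≤ 1 := by rw [abs_le]; constructor <;> linarith [hsn.1, hsn.2]
            nlinarith [abs_nonneg c, abs_nonneg d, abs_nonneg (r - (m:ℝ)), abs_nonneg (s - (n:ℝ))]
        _ ≤ R := by
            show |c| + |d| ≤ |a| + |b| + |c| + |d|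
            have := abs_nonneg a; have := abs_nonneg b; linarith
    set k : ℤ := ⌊h.z / ζ⌋ with hk
    set γ₂ : H3 := ⟨0, 0, Fq a b c d α β 0 0 + (-k : ℤ) * ζ⟩ with hγ₂
    have hγ₂mem : γ₂ ∈ Γ := ⟨0, 0, -k, by simp [hγ₂], by simp [hγ₂], rfl⟩
    refine ⟨γ₁ * γ₂, mul_mem hγ₁mem hγ₂mem, ?_⟩
    have hassoc : g * (γ₁ * γ₂) = h * γ₂ := by rw [hh, mul_assoc]
    rw [hassoc]
    apply hmemK
    · show |h.x + γ₂.x| ≤ R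
      simpa [hγ₂] using hxb
    · show |h.y + γ₂.y| ≤ R
      simpa [hγ₂] using hyb
    · show h.z + γ₂.z + h.x * γ₂.y ∈ Set.Icc (0:ℝ) ζ
      have : h.z + γ₂.z + h.x * γ₂.y = h.z - k * ζ := by
        simp [hγ₂, Fq_zero]; ring
      rw [this]
      constructor
      · have := Int.floor_le (h.z / ζ)
        rw [← hk] at this
        have := mul_le_mul_of_nonneg_right this (le_of_lt hζ)
        rw [div_mul_cancel₀ _ (ne_of_gt hζ)] at this
        linarith
      · have := Int.lt_floor_add_one (h.z / ζ)
        rw [← hk] at this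
        have := mul_lt_mul_of_pos_right this hζ
        rw [div_mul_cancel₀ _ (ne_of_gt hζ)] at this
        nlinarith
  constructor
  have : (Set.univ : Set (H3 ⧸ Γ)) = QuotientGroup.mk '' K := by
    ext q
    simp only [Set.mem_univ, true_iff]
    induction q using QuotientGroup.induction_on with
    | H g =>
      obtain ⟨γ, hγ, hgK⟩ := hsurj g
      refine ⟨g * γ, hgK, ?_⟩
      symm
      rw [QuotientGroup.eq]
      simpa using hγ
  rw [this]
  exact hKc.image QuotientGroup.continuous_mk

end H3
namespace H3

lemma latticeSub_mono {a b c d α β ζ a' b' c' d' α' β' ζ' : ℝ} {dj dj' : ℤ}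
    {hd : a * d - b * c = (dj : ℝ) * ζ} {hd' : a' * d' - b' * c' = (dj' : ℝ) * ζ'}
    (B00 B01 B10 B11 e : ℤ)
    (ha' : a' = a * B00 + b * B10) (hc' : c' = c * B00 + d * B10)
    (hb' : b' = a * B01 + b * B11) (hd2 : d' = c * B01 + d * B11)
    (hα' : α' = Fq a b c d α β B00 B10) (hβ' : β' = Fq a b c d α β B01 B11)
    (hζ' : ζ' = (e : ℝ) * ζ) :
    latticeSub a' b' c' d' α' β' ζ' dj' hd' ≤ latticeSub a b c d α β ζ dj hd := by
  rintro g ⟨m, n, k, h1, h2, h3⟩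
  obtain ⟨m2, hm2⟩ : ∃ m2 : ℤ, m * (m - 1) = 2 * m2 := by
    have h := Int.even_mul_succ_self (m - 1)
    rw [sub_add_cancel] at h
    obtain ⟨t, ht⟩ := h
    exact ⟨t, by rw [mul_comm (m-1) m] at ht; omega⟩
  obtain ⟨n2, hn2⟩ : ∃ n2 : ℤ, n * (n - 1) = 2 * n2 := by
    have h := Int.even_mul_succ_self (n - 1)
    rw [sub_add_cancel] at h
    obtain ⟨t, ht⟩ := h
    exact ⟨t, by rw [mul_comm (n-1) n] at ht; omega⟩
  refine ⟨B00 * m + B01 * n, B10 * m + B11 * n,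
    k * e + dj * (-(B00 * B10 * m2 + B01 * B11 * n2 + B01 * B10 * m * n)), ?_, ?_, ?_⟩
  · rw [h1, ha', hb']; push_cast; ring
  · rw [h2, hc', hd2]; push_cast; ring
  · rw [h3, ha', hb', hc', hd2, hα', hβ', hζ']
    simp only [Fq]
    push_cast
    have hm2' : (m : ℝ) * ((m : ℝ) - 1) = 2 * (m2 : ℝ) := by exact_mod_cast hm2
    have hn2' : (n : ℝ) * ((n : ℝ) - 1) = 2 * (n2 : ℝ) := by exact_mod_cast hn2
    linear_combination (-(B00 : ℝ) * B10 * m2 - (B01 : ℝ) * B11 * n2 - (B01 : ℝ) * B10 * m * n) * hd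
      - ((a * d - b * c) * B00 * B10 / 2) * hm2'
      - ((a * d - b * c) * B01 * B11 / 2) * hn2'

/-- If `S` is dense and every point of `S` pairs integrally with `v`, then `v = 0`. -/
lemma dense_pairing_eq_zero {v : ℝ × ℝ} {S : Set (ℝ × ℝ)} (hS : Dense S)
    (h : ∀ u ∈ S, ∃ n : ℤ, u.1 * v.1 + u.2 * v.2 = (n : ℝ)) : v = (0, 0) := by
  by_contra hv
  have hvsq : 0 < v.1 ^ 2 + v.2 ^ 2 := by
    rcases Prod.mk.injEq v.1 v.2 0 0 ▸ hv with h'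
    have : v.1 ≠ 0 ∨ v.2 ≠ 0 := by
      by_contra hc
      push_neg at hc
      exact hv (Prod.ext hc.1 hc.2)
    rcases this with h1 | h2
    · positivity
    · positivity
  set φ : ℝ × ℝ → ℝ := fun u => u.1 * v.1 + u.2 * v.2 with hφ
  have hφc : Continuous φ := by fun_prop
  have hclosed : IsClosed (φ ⁻¹' (Set.range ((↑) : ℤ → ℝ))) :=
    (Int.isClosedEmbedding_coe_real.isClosed_range).preimage hφc
  have hsub : S ⊆ φ ⁻¹' (Set.range ((↑) : ℤ → ℝ)) := by
    intro u hu
    obtain ⟨n, hn⟩ := h u hu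
    exact ⟨n, hn.symm⟩
  have hall : ∀ u : ℝ × ℝ, u ∈ φ ⁻¹' (Set.range ((↑) : ℤ → ℝ)) := by
    intro u
    have := hS.closure_eq ▸ (closure_mono hsub)
    have h2 : closure S ⊆ φ ⁻¹' (Set.range ((↑) : ℤ → ℝ)) := closure_minimal hsub hclosed
    exact h2 (hS.closure_eq ▸ Set.mem_univ u)
  set u₀ : ℝ × ℝ := (v.1 / (2 * (v.1 ^ 2 + v.2 ^ 2)), v.2 / (2 * (v.1 ^ 2 + v.2 ^ 2))) with hu₀
  obtain ⟨n, hn⟩ := hall u₀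
  have : φ u₀ = 1 / 2 := by
    simp only [hφ, hu₀]
    field_simp
  rw [this] at hn
  have h2n : ((2 * n : ℤ) : ℝ) = 1 := by push_cast; linarith [hn]
  have : (2 * n : ℤ) = 1 := by exact_mod_cast h2n
  omega

/-- If `T` is dense in `ℝ` and every point of `T` multiplies `z` into `ℤ`, then `z = 0`. -/
lemma dense_mul_eq_zero {z : ℝ} {T : Set ℝ} (hT : Dense T)
    (h : ∀ t ∈ T, ∃ n : ℤ, t * z = (n : ℝ)) : z = 0 := by
  by_contra hz
  set φ : ℝ → ℝ := fun t => t * z with hφ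
  have hφc : Continuous φ := by fun_prop
  have hclosed : IsClosed (φ ⁻¹' (Set.range ((↑) : ℤ → ℝ))) :=
    (Int.isClosedEmbedding_coe_real.isClosed_range).preimage hφc
  have hsub : T ⊆ φ ⁻¹' (Set.range ((↑) : ℤ → ℝ)) := by
    intro u hu
    obtain ⟨n, hn⟩ := h u hu
    exact ⟨n, hn.symm⟩
  have h2 : closure T ⊆ φ ⁻¹' (Set.range ((↑) : ℤ → ℝ)) := closure_minimal hsub hclosed
  obtain ⟨n, hn⟩ := h2 (hT.closure_eq ▸ Set.mem_univ (1 / (2 * z)))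
  have : φ (1 / (2 * z)) = 1 / 2 := by
    simp only [hφ]
    field_simp
  rw [this] at hn
  have h2n : ((2 * n : ℤ) : ℝ) = 1 := by push_cast; linarith [hn.symm]
  have : (2 * n : ℤ) = 1 := by exact_mod_cast h2n
  omega

end H3
/-- Proposition 5.5: given nested data `A_jℤ²` and `ζ_j` with `ζ_j | det A_j`,
there is a nested sequence of lattices `Γ_j` in `H₃(ℝ)` with `p(Γ_j) = A_jℤ²` and
`ξ_{Γ_j} = ζ_j`; if the union of the duals is dense then `⋂ p(Γ_j) = {0}`, and if in
addition `⋃ ζ_j⁻¹ℤ` is dense in `ℝ` then `⋂ Γ_j = {1}`. -/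
theorem exists_lattice_sequence_with_invariants
    (A : ℕ → Matrix (Fin 2) (Fin 2) ℝ) (hdet : ∀ j, 0 < (A j).det)
    (hnested : ∀ j, matVec (A (j + 1)) '' intLattice ⊆ matVec (A j) '' intLattice)
    (ζ : ℕ → ℝ) (hζpos : ∀ j, 0 < ζ j)
    (hζdiv : ∀ j, ∃ m : ℤ, ζ (j + 1) = (m : ℝ) * ζ j)
    (hdetdiv : ∀ j, ∃ m : ℤ, (A j).det = (m : ℝ) * ζ j) :
    ∃ Γ : ℕ → Subgroup H3,
      (∀ j, IsLattice (Γ j)) ∧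
      (∀ j, Γ (j + 1) ≤ Γ j) ∧
      (∀ j, pmap '' (Γ j : Set H3) = matVec (A j) '' intLattice) ∧
      (∀ j t, Hc t ∈ Γ j ↔ ∃ m : ℤ, t = (m : ℝ) * ζ j) ∧
      (Dense (⋃ j, dualSet (matVec (A j) '' intLattice)) →
        (⋂ j, pmap '' (Γ j : Set H3)) = {(0, 0)}) ∧
      (Dense (⋃ j, dualSet (matVec (A j) '' intLattice)) →
        Dense (⋃ j, {t : ℝ | ∃ m : ℤ, t = (m : ℝ) / ζ j}) →
        (⋂ j, (Γ j : Set H3)) = {1}) := by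
  -- determinant in terms of entries
  have hdet2 : ∀ j, (A j).det = A j 0 0 * A j 1 1 - A j 0 1 * A j 1 0 :=
    fun j => Matrix.det_fin_two (A j)
  have hDne : ∀ j, A j 0 0 * A j 1 1 - A j 0 1 * A j 1 0 ≠ 0 := by
    intro j
    have := hdet j
    rw [hdet2 j] at this
    exact ne_of_gt this
  have hd : ∀ j, ∃ m : ℤ, A j 0 0 * A j 1 1 - A j 0 1 * A j 1 0 = (m : ℝ) * ζ j := by
    intro j
    obtain ⟨m, hm⟩ := hdetdiv j
    exact ⟨m, by rw [← hdet2 j]; exact hm⟩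
  choose dj hdj using hd
  choose ej hej using hζdiv
  -- integer matrices expressing nesting
  have hcol : ∀ j, ∃ p q p' q' : ℤ,
      A (j+1) 0 0 = A j 0 0 * p + A j 0 1 * q ∧
      A (j+1) 1 0 = A j 1 0 * p + A j 1 1 * q ∧
      A (j+1) 0 1 = A j 0 0 * p' + A j 0 1 * q' ∧
      A (j+1) 1 1 = A j 1 0 * p' + A j 1 1 * q' := by
    intro j
    have h1 : matVec (A (j+1)) ((1:ℝ), (0:ℝ)) ∈ matVec (A j) '' intLattice :=
      hnested j ⟨((1:ℝ), (0:ℝ)), ⟨1, 0, by norm_num⟩, rfl⟩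
    have h2 : matVec (A (j+1)) ((0:ℝ), (1:ℝ)) ∈ matVec (A j) '' intLattice :=
      hnested j ⟨((0:ℝ), (1:ℝ)), ⟨0, 1, by norm_num⟩, rfl⟩
    obtain ⟨v, ⟨p, q, rfl⟩, hv⟩ := h1
    obtain ⟨w, ⟨p', q', rfl⟩, hw⟩ := h2
    have hv1 := congrArg Prod.fst hv
    have hv2 := congrArg Prod.snd hv
    have hw1 := congrArg Prod.fst hw
    have hw2 := congrArg Prod.snd hw
    simp only [matVec] at hv1 hv2 hw1 hw2
    refine ⟨p, q, p', q', by linarith, by linarith, by linarith, by linarith⟩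
  choose B00 B10 B01 B11 h00 h10 h01 h11 using hcol
  -- recursively defined section shifts
  set αβ : ℕ → ℝ × ℝ := fun j => Nat.rec ((0:ℝ), (0:ℝ))
    (fun i ih => (Fq (A i 0 0) (A i 0 1) (A i 1 0) (A i 1 1) ih.1 ih.2 (B00 i) (B10 i),
                  Fq (A i 0 0) (A i 0 1) (A i 1 0) (A i 1 1) ih.1 ih.2 (B01 i) (B11 i))) j
    with hαβ
  set Γ : ℕ → Subgroup H3 := fun j =>
    latticeSub (A j 0 0) (A j 0 1) (A j 1 0) (A j 1 1) (αβ j).1 (αβ j).2 (ζ j) (dj j) (hdj j)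
    with hΓ
  -- part 3 first, since it is reused
  have part3 : ∀ j, pmap '' (Γ j : Set H3) = matVec (A j) '' intLattice := by
    intro j
    ext v
    constructor
    · rintro ⟨g, ⟨m, n, k, h1, h2, h3⟩, rfl⟩
      refine ⟨((m:ℝ), (n:ℝ)), ⟨m, n, rfl⟩, ?_⟩
      simp only [matVec, pmap]
      exact Prod.ext h1.symm h2.symm
    · rintro ⟨w, ⟨m, n, rfl⟩, rfl⟩
      exact ⟨⟨A j 0 0 * m + A j 0 1 * n, A j 1 0 * m + A j 1 1 * n,
        Fq (A j 0 0) (A j 0 1) (A j 1 0) (A j 1 1) (αβ j).1 (αβ j).2 m n + (0:ℤ) * ζ j⟩,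
        ⟨m, n, 0, rfl, rfl, rfl⟩, rfl⟩
  have part4 : ∀ j t, Hc t ∈ Γ j ↔ ∃ m : ℤ, t = (m : ℝ) * ζ j := by
    intro j t
    constructor
    · rintro ⟨m, n, k, h1, h2, h3⟩
      have hx : A j 0 0 * (m:ℝ) + A j 0 1 * n = 0 := by
        have : (Hc t).x = 0 := rfl
        rw [this] at h1; linarith
      have hy : A j 1 0 * (m:ℝ) + A j 1 1 * n = 0 := by
        have : (Hc t).y = 0 := rfl
        rw [this] at h2; linarith
      obtain ⟨hm0, hn0⟩ := int_pair_eq_zero (hDne j) hx hy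
      subst hm0; subst hn0
      refine ⟨k, ?_⟩
      have : (Hc t).z = t := rfl
      rw [this, Fq_zero] at h3
      linarith
    · rintro ⟨m, rfl⟩
      exact ⟨0, 0, m, by simp [Hc], by simp [Hc], by simp [Hc, Fq_zero]⟩
  have part5 : Dense (⋃ j, dualSet (matVec (A j) '' intLattice)) →
      (⋂ j, pmap '' (Γ j : Set H3)) = {(0, 0)} := by
    intro hdense
    apply Set.eq_singleton_iff_unique_mem.mpr
    constructor
    · refine Set.mem_iInter.2 fun j => ⟨1, one_mem _, rfl⟩
    · intro v hv
      apply dense_pairing_eq_zero hdense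
      intro u hu
      obtain ⟨S, ⟨j, rfl⟩, hj⟩ := hu
      have hvj : v ∈ matVec (A j) '' intLattice := by
        rw [← part3 j]
        exact Set.mem_iInter.1 hv j
      exact hj v hvj
  refine ⟨Γ, ?_, ?_, part3, part4, part5, ?_⟩
  · intro j
    exact ⟨latticeSub_discrete (hDne j) (hζpos j), latticeSub_cocompact (hDne j) (hζpos j)⟩
  · intro j
    exact latticeSub_mono (B00 j) (B01 j) (B10 j) (B11 j) (ej j)
      (h00 j) (h10 j) (h01 j) (h11 j) rfl rfl (hej j)
  · intro hdense hdense2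
    ext g
    simp only [Set.mem_iInter, Set.mem_singleton_iff]
    constructor
    · intro hg
      have hv : pmap g ∈ ⋂ j, pmap '' (Γ j : Set H3) :=
        Set.mem_iInter.2 fun j => ⟨g, hg j, rfl⟩
      rw [part5 hdense] at hv
      have hgx : g.x = 0 := congrArg Prod.fst hv
      have hgy : g.y = 0 := congrArg Prod.snd hv
      have hgc : g = Hc g.z := by
        ext
        · exact hgx
        · exact hgy
        · rfl
      have hz : ∀ j, ∃ m : ℤ, g.z = (m : ℝ) * ζ j := by
        intro j
        exact (part4 j g.z).1 (hgc ▸ hg j)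
      have hz0 : g.z = 0 := by
        apply dense_mul_eq_zero hdense2
        intro t ht
        obtain ⟨T, ⟨j, rfl⟩, m, rfl⟩ := ht
        obtain ⟨m', hm'⟩ := hz j
        refine ⟨m * m', ?_⟩
        rw [hm']
        have hζne : ζ j ≠ 0 := ne_of_gt (hζpos j)
        field_simp
        push_cast
        ring
      rw [hgc, hz0]
      rfl
    · rintro rfl
      exact fun j => one_mem _
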